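/- Let ρ ∈ [1,2). Then there exists a constant C_ρ > 0 such that for all t ∈ (0,∞): ( ∫_0^{e^t − 1} |K0(r,t)|^ρ dr )^{1/ρ} ≤ C_ρ (e^t − 1)^{1/ρ} (e^t + 1)^{−1}. -/

import Mathlib

open MeasureTheory Real intervalIntegral

/-- Rising factorial (Pochhammer symbol) `(q)_n = q (q+1) ⋯ (q+n−1)`. -/
noncomputable def risingFactorial (q : ℝ) : ℕ → ℝ
  | 0 => 1
  | n + 1 => risingFactorial q n * (q + (n : ℝ))

/-- The Gauss hypergeometric function `F(a,b;c;x)` defined by its power series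
`∑ ((a)_n (b)_n / ((c)_n n!)) x^n`. -/
noncomputable def hyperF (a b c x : ℝ) : ℝ :=
  ∑' n : ℕ, (risingFactorial a n * risingFactorial b n) /
    (risingFactorial c n * (Nat.factorial n : ℝ)) * x ^ n

/-- The kernel `K1(z,t) = ((1+e^t)²−z²)^{−1/2} F(1/2,1/2;1;((e^t−1)²−z²)/((e^t+1)²−z²))`. -/
noncomputable def K1 (z t : ℝ) : ℝ :=
  ((1 + Real.exp t) ^ 2 - z ^ 2) ^ (-(1 : ℝ) / 2) *
    hyperF (1 / 2) (1 / 2) 1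
      (((Real.exp t - 1) ^ 2 - z ^ 2) / ((Real.exp t + 1) ^ 2 - z ^ 2))

/-- The kernel `K0(z,t)`. -/
noncomputable def K0 (z t : ℝ) : ℝ :=
  -(1 / (2 * ((Real.exp t - 1) ^ 2 - z ^ 2) * Real.sqrt ((Real.exp t + 1) ^ 2 - z ^ 2))) *
    ((1 - Real.exp (2 * t) + z ^ 2) *
        hyperF (-(1 / 2)) (1 / 2) 1
          (((Real.exp t - 1) ^ 2 - z ^ 2) / ((Real.exp t + 1) ^ 2 - z ^ 2))
      + 2 * (Real.exp t - 1) *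
        hyperF (1 / 2) (1 / 2) 1
          (((Real.exp t - 1) ^ 2 - z ^ 2) / ((Real.exp t + 1) ^ 2 - z ^ 2)))

/-! Let `c n = (1/2)_n / n!`, the coefficients of the binomial series of `(1 - x)^(-1/2)`. Then
`F(1/2,1/2;1;x) = ∑ c n ^ 2 xⁿ` and `F(-1/2,1/2;1;x) = 1 - x ∑ c (n+1) (c n - c (n+1)) xⁿ`, so the
difference of the two is `x ∑ c n c (n+1) xⁿ ≤ x (1 - x)^(-1/2)`, while `0 ≤ F(-1/2,1/2;1;x) ≤ 1`
because the coefficients of the second series telescope against `c n ^ 2`. With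
`D = (eᵗ+1)² - z² ≥ 4eᵗ` one has `1 - ζ = 4eᵗ/D`, and these bounds give
`|K0(z,t)| ≤ D^(-1/2) ≤ ((eᵗ+1)(eᵗ+1-z))^(-1/2)`. The `ρ`-th power of the last expression
integrates over `[0, eᵗ-1]` to at most `(eᵗ-1)(eᵗ+1)^(-ρ) / (1 - ρ/2)`, as `ρ < 2`. -/

open scoped Nat

lemma risingFactorial_eq_ascPochhammer_eval (q : ℝ) (n : ℕ) :
    risingFactorial q n = (ascPochhammer ℝ n).eval q := by
  induction n with
  | zero => simp [risingFactorial]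
  | succ n ih => rw [risingFactorial, ih, ascPochhammer_succ_eval]

lemma risingFactorial_div_factorial_eq_choose (q : ℝ) (n : ℕ) :
    risingFactorial q n / n ! = Ring.choose (q + n - 1) n := by
  rw [← Ring.multichoose_eq, risingFactorial_eq_ascPochhammer_eval,
    ← Polynomial.ascPochhammer_smeval_eq_eval, ← Ring.factorial_nsmul_multichoose_eq_ascPochhammer,
    nsmul_eq_mul, mul_div_cancel_left₀ _ (by positivity)]

lemma hasSum_risingFactorial_div_factorial_mul_pow (q : ℝ) {x : ℝ} (hx : |x| < 1) :
    HasSum (fun n => risingFactorial q n / n ! * x ^ n) (1 / (1 - x) ^ q) := by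
  have h := (one_div_one_sub_rpow_hasFPowerSeriesOnBall_zero q).hasSum (y := x)
    (by simpa [enorm_eq_nnnorm, ← NNReal.coe_lt_coe] using hx)
  simpa [risingFactorial_div_factorial_eq_choose, FormalMultilinearSeries.ofScalars_apply_eq,
    mul_comm] using h

lemma risingFactorial_one (n : ℕ) : risingFactorial 1 n = n ! := by
  induction n with
  | zero => simp [risingFactorial]
  | succ n ih => rw [risingFactorial, ih, Nat.factorial_succ]; push_cast; ring

lemma risingFactorial_succ_eq_mul (q : ℝ) (n : ℕ) :
    risingFactorial q (n + 1) = q * risingFactorial (q + 1) n := by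
  induction n with
  | zero => simp [risingFactorial]
  | succ n ih => rw [risingFactorial, ih, risingFactorial]; push_cast; ring

noncomputable def hyperCoeff (a b c : ℝ) (n : ℕ) : ℝ :=
  risingFactorial a n * risingFactorial b n / (risingFactorial c n * n !)

lemma hyperF_eq_tsum (a b c x : ℝ) : hyperF a b c x = ∑' n, hyperCoeff a b c n * x ^ n := rfl

lemma hyperCoeff_zero (a b c : ℝ) : hyperCoeff a b c 0 = 1 := by
  simp [hyperCoeff, risingFactorial]

lemma summable_mul_pow_of_abs_le_one {a : ℕ → ℝ} (ha : ∀ n, |a n| ≤ 1) {x : ℝ} (hx : |x| < 1) :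
    Summable fun n => a n * x ^ n := by
  refine .of_norm_bounded (summable_geometric_of_lt_one (abs_nonneg x) hx) fun n => ?_
  rw [norm_mul, norm_pow, Real.norm_eq_abs, Real.norm_eq_abs]
  exact mul_le_of_le_one_left (by positivity) (ha n)

lemma hyperF_eq_one_add_mul_tsum {a b c x : ℝ}
    (hs : Summable fun n => hyperCoeff a b c n * x ^ n) :
    hyperF a b c x = 1 + x * ∑' n, hyperCoeff a b c (n + 1) * x ^ n := by
  rw [hyperF_eq_tsum, hs.tsum_eq_zero_add, hyperCoeff_zero, ← tsum_mul_left]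
  simp only [pow_zero, mul_one, pow_succ]
  congr 1
  exact tsum_congr fun n => by ring

noncomputable def invSqrtCoeff (n : ℕ) : ℝ := risingFactorial (1 / 2) n / n !

lemma hasSum_invSqrtCoeff_mul_pow {x : ℝ} (hx : |x| < 1) :
    HasSum (fun n => invSqrtCoeff n * x ^ n) (1 / √(1 - x)) := by
  rw [Real.sqrt_eq_rpow]
  exact hasSum_risingFactorial_div_factorial_mul_pow _ hx

lemma invSqrtCoeff_zero : invSqrtCoeff 0 = 1 := by simp [invSqrtCoeff, risingFactorial]

lemma invSqrtCoeff_succ (n : ℕ) :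
    invSqrtCoeff (n + 1) = invSqrtCoeff n * ((n + 1 / 2) / (n + 1)) := by
  simp only [invSqrtCoeff, risingFactorial, Nat.factorial_succ, Nat.cast_mul, Nat.cast_succ]
  field_simp
  ring

lemma invSqrtCoeff_pos (n : ℕ) : 0 < invSqrtCoeff n := by
  induction n with
  | zero => simp [invSqrtCoeff_zero]
  | succ n ih => rw [invSqrtCoeff_succ]; positivity

lemma invSqrtCoeff_succ_le (n : ℕ) : invSqrtCoeff (n + 1) ≤ invSqrtCoeff n := by
  rw [invSqrtCoeff_succ]
  exact mul_le_of_le_one_right (invSqrtCoeff_pos n).le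
    ((div_le_one (by positivity)).2 (by linarith))

lemma invSqrtCoeff_le_one (n : ℕ) : invSqrtCoeff n ≤ 1 := by
  induction n with
  | zero => simp [invSqrtCoeff_zero]
  | succ n ih => exact (invSqrtCoeff_succ_le n).trans ih

lemma hyperCoeff_half_half (n : ℕ) : hyperCoeff (1 / 2) (1 / 2) 1 n = invSqrtCoeff n ^ 2 := by
  rw [hyperCoeff, risingFactorial_one, invSqrtCoeff]
  ring

lemma hyperCoeff_neg_half_half_succ (n : ℕ) :
    hyperCoeff (-(1 / 2)) (1 / 2) 1 (n + 1) =
      -(invSqrtCoeff (n + 1) * (invSqrtCoeff n - invSqrtCoeff (n + 1))) := by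
  have h : invSqrtCoeff n - invSqrtCoeff (n + 1) = invSqrtCoeff n / (2 * (n + 1)) := by
    rw [invSqrtCoeff_succ]; field_simp; ring
  rw [h, hyperCoeff, risingFactorial_one, risingFactorial_succ_eq_mul,
    show -(1 / 2 : ℝ) + 1 = 1 / 2 by norm_num, invSqrtCoeff, invSqrtCoeff, Nat.factorial_succ]
  push_cast
  field_simp

lemma invSqrtCoeff_mul_sub_succ_nonneg (n : ℕ) :
    0 ≤ invSqrtCoeff (n + 1) * (invSqrtCoeff n - invSqrtCoeff (n + 1)) :=
  mul_nonneg (invSqrtCoeff_pos _).le (sub_nonneg.2 (invSqrtCoeff_succ_le n))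

lemma invSqrtCoeff_mul_sub_succ_le (n : ℕ) :
    invSqrtCoeff (n + 1) * (invSqrtCoeff n - invSqrtCoeff (n + 1)) ≤
      invSqrtCoeff n ^ 2 - invSqrtCoeff (n + 1) ^ 2 := by
  have := invSqrtCoeff_pos n
  nlinarith [invSqrtCoeff_succ_le n]

lemma abs_hyperCoeff_half_half_le_one (n : ℕ) : |hyperCoeff (1 / 2) (1 / 2) 1 n| ≤ 1 := by
  rw [hyperCoeff_half_half, abs_of_nonneg (sq_nonneg _)]
  exact pow_le_one₀ (invSqrtCoeff_pos n).le (invSqrtCoeff_le_one n)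

lemma abs_hyperCoeff_neg_half_half_le_one (n : ℕ) :
    |hyperCoeff (-(1 / 2)) (1 / 2) 1 n| ≤ 1 := by
  cases n with
  | zero => simp [hyperCoeff_zero]
  | succ n =>
    rw [hyperCoeff_neg_half_half_succ, abs_neg, abs_of_nonneg (invSqrtCoeff_mul_sub_succ_nonneg n)]
    exact (invSqrtCoeff_mul_sub_succ_le n).trans <| (sub_le_self _ (sq_nonneg _)).trans
      (pow_le_one₀ (invSqrtCoeff_pos n).le (invSqrtCoeff_le_one n))

noncomputable def hyperDiffSeries (x : ℝ) : ℝ :=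
  ∑' n, invSqrtCoeff n * invSqrtCoeff (n + 1) * x ^ n

lemma hyperF_half_half_sub_neg_half {x : ℝ} (hx : |x| < 1) :
    hyperF (1 / 2) (1 / 2) 1 x - hyperF (-(1 / 2)) (1 / 2) 1 x = x * hyperDiffSeries x := by
  have hshift {a b : ℝ} (hab : ∀ n, |hyperCoeff a b 1 n| ≤ 1) :
      Summable fun n => hyperCoeff a b 1 (n + 1) * x ^ n :=
    summable_mul_pow_of_abs_le_one (fun n => hab (n + 1)) hx
  rw [hyperF_eq_one_add_mul_tsum
      (summable_mul_pow_of_abs_le_one abs_hyperCoeff_half_half_le_one hx),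
    hyperF_eq_one_add_mul_tsum
      (summable_mul_pow_of_abs_le_one abs_hyperCoeff_neg_half_half_le_one hx),
    add_sub_add_left_eq_sub, ← mul_sub,
    ← (hshift abs_hyperCoeff_half_half_le_one).tsum_sub
      (hshift abs_hyperCoeff_neg_half_half_le_one), hyperDiffSeries]
  congr 1
  refine tsum_congr fun n => ?_
  rw [hyperCoeff_half_half, hyperCoeff_neg_half_half_succ]
  ring

lemma hyperDiffSeries_nonneg {x : ℝ} (hx : 0 ≤ x) : 0 ≤ hyperDiffSeries x :=
  tsum_nonneg fun n => by have := invSqrtCoeff_pos n; have := invSqrtCoeff_pos (n + 1); positivity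

/-- Dropping the factors `invSqrtCoeff (n + 1) ≤ 1` leaves the series of `(1 - x)^(-1/2)`. -/
lemma hyperDiffSeries_le {x : ℝ} (hx0 : 0 ≤ x) (hx1 : x < 1) :
    hyperDiffSeries x ≤ 1 / √(1 - x) := by
  have hx : |x| < 1 := by rwa [abs_of_nonneg hx0]
  have hc (n : ℕ) : |invSqrtCoeff n * invSqrtCoeff (n + 1)| ≤ 1 := by
    rw [abs_of_pos (mul_pos (invSqrtCoeff_pos _) (invSqrtCoeff_pos _))]
    exact mul_le_one₀ (invSqrtCoeff_le_one n) (invSqrtCoeff_pos _).le (invSqrtCoeff_le_one _)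
  refine hasSum_le (fun n => ?_) (summable_mul_pow_of_abs_le_one hc hx).hasSum
    (hasSum_invSqrtCoeff_mul_pow hx)
  exact mul_le_mul_of_nonneg_right
    (mul_le_of_le_one_right (invSqrtCoeff_pos n).le (invSqrtCoeff_le_one _)) (pow_nonneg hx0 n)

lemma abs_hyperF_neg_half_half_le_one {x : ℝ} (hx0 : 0 ≤ x) (hx1 : x < 1) :
    |hyperF (-(1 / 2)) (1 / 2) 1 x| ≤ 1 := by
  have hx : |x| < 1 := by rwa [abs_of_nonneg hx0]
  set S := ∑' n, invSqrtCoeff (n + 1) * (invSqrtCoeff n - invSqrtCoeff (n + 1)) * x ^ n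
  have hS0 : 0 ≤ S := tsum_nonneg fun n =>
    mul_nonneg (invSqrtCoeff_mul_sub_succ_nonneg n) (pow_nonneg hx0 n)
  -- the coefficients telescope against `invSqrtCoeff n ^ 2`
  have hS1 : S ≤ 1 := by
    refine Real.tsum_le_of_sum_range_le
      (fun n => mul_nonneg (invSqrtCoeff_mul_sub_succ_nonneg n) (pow_nonneg hx0 n)) fun N => ?_
    calc ∑ n ∈ Finset.range N,
          invSqrtCoeff (n + 1) * (invSqrtCoeff n - invSqrtCoeff (n + 1)) * x ^ n
        ≤ ∑ n ∈ Finset.range N, (invSqrtCoeff n ^ 2 - invSqrtCoeff (n + 1) ^ 2) :=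
          Finset.sum_le_sum fun n _ => mul_le_of_le_one_right
            (invSqrtCoeff_mul_sub_succ_nonneg n) (pow_le_one₀ hx0 hx1.le)
            |>.trans (invSqrtCoeff_mul_sub_succ_le n)
      _ = 1 - invSqrtCoeff N ^ 2 := by
          rw [Finset.sum_range_sub' (fun n => invSqrtCoeff n ^ 2), invSqrtCoeff_zero, one_pow]
      _ ≤ 1 := sub_le_self _ (sq_nonneg _)
  have hF : hyperF (-(1 / 2)) (1 / 2) 1 x = 1 - x * S := by
    rw [hyperF_eq_one_add_mul_tsum
      (summable_mul_pow_of_abs_le_one abs_hyperCoeff_neg_half_half_le_one hx), sub_eq_add_neg,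
      ← mul_neg, ← tsum_neg]
    simp only [hyperCoeff_neg_half_half_succ, neg_mul]
  rw [hF, abs_le]
  constructor <;> nlinarith

lemma K0_eq {z t : ℝ} (hz0 : 0 ≤ z) (hz : z < exp t - 1) :
    K0 z t =
      hyperF (-(1 / 2)) (1 / 2) 1 (((exp t - 1) ^ 2 - z ^ 2) / ((exp t + 1) ^ 2 - z ^ 2)) /
          (2 * √((exp t + 1) ^ 2 - z ^ 2)) -
        (exp t - 1) * hyperDiffSeries (((exp t - 1) ^ 2 - z ^ 2) / ((exp t + 1) ^ 2 - z ^ 2)) /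
          (((exp t + 1) ^ 2 - z ^ 2) * √((exp t + 1) ^ 2 - z ^ 2)) := by
  have hDm : 0 < (exp t - 1) ^ 2 - z ^ 2 := by nlinarith
  have hDp : 0 < (exp t + 1) ^ 2 - z ^ 2 := by nlinarith [exp_pos t]
  have hζ : |((exp t - 1) ^ 2 - z ^ 2) / ((exp t + 1) ^ 2 - z ^ 2)| < 1 := by
    rw [abs_of_pos (by positivity), div_lt_one hDp]
    nlinarith [exp_pos t]
  have hsqrt := Real.sqrt_pos.2 hDp
  have hF := hyperF_half_half_sub_neg_half hζ
  rw [K0, show exp (2 * t) = exp t ^ 2 by rw [← exp_nat_mul]; norm_num, ← sub_add_cancel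
    (hyperF (1 / 2) (1 / 2) 1 _) (hyperF (-(1 / 2)) (1 / 2) 1 _), hF]
  field_simp
  ring

lemma abs_K0_le {z t : ℝ} (hz0 : 0 ≤ z) (hz : z ≤ exp t - 1) :
    |K0 z t| ≤ 1 / √((exp t + 1) ^ 2 - z ^ 2) := by
  rcases hz.eq_or_lt with rfl | hz
  · -- at the endpoint the prefactor of `K0` divides by zero, so `K0 = 0`
    simp [K0]
  set E := exp t
  set D := (E + 1) ^ 2 - z ^ 2
  set ζ := ((E - 1) ^ 2 - z ^ 2) / D
  have hE : 1 < E := by linarith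
  have hD : 4 * E ≤ D := by nlinarith
  have hD0 : 0 < D := by linarith
  have hζ0 : 0 ≤ ζ := div_nonneg (by nlinarith) hD0.le
  have hζ1 : 1 - ζ = 4 * E / D := by
    rw [eq_div_iff hD0.ne', sub_mul, div_mul_cancel₀ _ hD0.ne']
    ring
  have hζ1' : ζ < 1 := by linarith [show 0 < 4 * E / D by positivity]
  have hG0 := hyperDiffSeries_nonneg hζ0
  have hG : (E - 1) * hyperDiffSeries ζ ≤ D / 2 := by
    have hG1 := hyperDiffSeries_le hζ0 hζ1'
    have hGsq : hyperDiffSeries ζ ^ 2 ≤ D / (4 * E) := by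
      calc hyperDiffSeries ζ ^ 2 ≤ (1 / √(1 - ζ)) ^ 2 := pow_le_pow_left₀ hG0 hG1 2
        _ = D / (4 * E) := by rw [div_pow, Real.sq_sqrt (by linarith), hζ1]; field_simp
    have hED : (E - 1) ^ 2 ≤ E * D := by nlinarith
    refine le_of_pow_le_pow_left₀ two_ne_zero (by positivity) ?_
    calc ((E - 1) * hyperDiffSeries ζ) ^ 2 ≤ (E - 1) ^ 2 * (D / (4 * E)) := by
          rw [mul_pow]; gcongr
      _ ≤ (E * D) * (D / (4 * E)) := by gcongr
      _ = (D / 2) ^ 2 := by field_simp; ring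
  have hsqrt := Real.sqrt_pos.2 hD0
  rw [K0_eq hz0 hz]
  calc _ ≤ |hyperF (-(1 / 2)) (1 / 2) 1 ζ| / (2 * √D)
          + (E - 1) * hyperDiffSeries ζ / (D * √D) := by
        refine (abs_sub _ _).trans_eq ?_
        rw [abs_div, abs_div, abs_of_pos (by positivity : 0 < 2 * √D),
          abs_of_nonneg (by nlinarith : 0 ≤ (E - 1) * hyperDiffSeries ζ),
          abs_of_pos (by positivity : 0 < D * √D)]
    _ ≤ 1 / (2 * √D) + D / 2 / (D * √D) := by
        gcongr
        exact abs_hyperF_neg_half_half_le_one hζ0 hζ1'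
    _ = 1 / √D := by field_simp; ring

lemma abs_K0_rpow_le {ρ r t : ℝ} (hρ : 0 ≤ ρ) (hr0 : 0 ≤ r) (hr : r ≤ exp t - 1) :
    |K0 r t| ^ ρ ≤ (exp t + 1) ^ (-(ρ / 2)) * (exp t + 1 - r) ^ (-(ρ / 2)) := by
  have hA : 0 < exp t + 1 := by positivity
  have hAr : 0 < exp t + 1 - r := by linarith
  have hprod : 0 < (exp t + 1) * (exp t + 1 - r) := mul_pos hA hAr
  calc |K0 r t| ^ ρ ≤ (1 / √((exp t + 1) ^ 2 - r ^ 2)) ^ ρ :=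
        rpow_le_rpow (abs_nonneg _) (abs_K0_le hr0 hr) hρ
    _ ≤ (1 / √((exp t + 1) * (exp t + 1 - r))) ^ ρ := by
        gcongr
        nlinarith
    _ = _ := by
        rw [sqrt_eq_rpow, one_div, ← rpow_neg hprod.le, ← rpow_mul hprod.le,
          mul_rpow hA.le hAr.le]
        ring_nf

lemma integral_sub_rpow_neg_le {p A B : ℝ} (hp0 : 0 ≤ p) (hp1 : p < 1) (hB : 0 ≤ B)
    (hBA : B < A) : ∫ r in (0 : ℝ)..B, (A - r) ^ (-p) ≤ B * A ^ (-p) / (1 - p) := by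
  have hA : 0 < A := by linarith
  have hAB : 0 < A - B := by linarith
  rw [intervalIntegral.integral_comp_sub_left (fun x => x ^ (-p)), sub_zero,
    integral_rpow (Or.inl (by linarith)), show -p + 1 = 1 - p by ring]
  gcongr
  have hsplit {x : ℝ} (hx : 0 < x) : x ^ (1 - p) = x * x ^ (-p) := by
    rw [sub_eq_add_neg, rpow_add hx, rpow_one]
  have hanti : (A - B) * A ^ (-p) ≤ (A - B) * (A - B) ^ (-p) :=
    mul_le_mul_of_nonneg_left (rpow_le_rpow_of_nonpos hAB (by linarith) (by linarith)) hAB.le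
  rw [hsplit hA, hsplit hAB]
  linarith

lemma intervalIntegral_le_of_nonneg_of_le {f g : ℝ → ℝ} {a b : ℝ} (hab : a ≤ b)
    (hf : ∀ x ∈ Set.Ioc a b, 0 ≤ f x) (hg : IntervalIntegrable g volume a b)
    (hfg : ∀ x ∈ Set.Ioc a b, f x ≤ g x) : ∫ x in a..b, f x ≤ ∫ x in a..b, g x := by
  rw [intervalIntegral.integral_of_le hab, intervalIntegral.integral_of_le hab]
  exact integral_mono_of_nonneg (ae_restrict_of_forall_mem measurableSet_Ioc hf) hg.1
    (ae_restrict_of_forall_mem measurableSet_Ioc hfg)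

lemma integral_abs_K0_rpow_le {ρ t : ℝ} (hρ0 : 0 ≤ ρ) (hρ2 : ρ < 2) (ht : 0 ≤ t) :
    ∫ r in (0 : ℝ)..exp t - 1, |K0 r t| ^ ρ ≤
      (exp t - 1) * (exp t + 1) ^ (-ρ) / (1 - ρ / 2) := by
  have hB : 0 ≤ exp t - 1 := by linarith [one_le_exp ht]
  have hA : 0 < exp t + 1 := by positivity
  have hint :
      IntervalIntegrable (fun r => (exp t + 1 - r) ^ (-(ρ / 2))) volume 0 (exp t - 1) := by
    refine ContinuousOn.intervalIntegrable fun r hr => ?_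
    rw [Set.uIcc_of_le hB] at hr
    exact ((continuousAt_const.sub continuousAt_id).rpow_const
      (Or.inl (show exp t + 1 - r ≠ 0 by linarith [hr.2]))).continuousWithinAt
  calc ∫ r in (0 : ℝ)..exp t - 1, |K0 r t| ^ ρ
      ≤ ∫ r in (0 : ℝ)..exp t - 1, (exp t + 1) ^ (-(ρ / 2)) * (exp t + 1 - r) ^ (-(ρ / 2)) :=
        intervalIntegral_le_of_nonneg_of_le hB (fun r _ => by positivity) (hint.const_mul _)
          fun r hr => abs_K0_rpow_le hρ0 hr.1.le hr.2
    _ = (exp t + 1) ^ (-(ρ / 2)) * ∫ r in (0 : ℝ)..exp t - 1, (exp t + 1 - r) ^ (-(ρ / 2)) :=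
        intervalIntegral.integral_const_mul _ _
    _ ≤ (exp t + 1) ^ (-(ρ / 2)) * ((exp t - 1) * (exp t + 1) ^ (-(ρ / 2)) / (1 - ρ / 2)) := by
        gcongr
        exact integral_sub_rpow_neg_le (by linarith) (by linarith) hB (by linarith)
    _ = (exp t - 1) * (exp t + 1) ^ (-ρ) / (1 - ρ / 2) := by
        rw [show -ρ = -(ρ / 2) + -(ρ / 2) by ring, rpow_add hA]
        ring

theorem statement16 (ρ : ℝ) (hρ1 : 1 ≤ ρ) (hρ2 : ρ < 2) :
    ∃ Cρ > 0, ∀ t : ℝ, 0 < t →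
      (∫ r in (0 : ℝ)..(Real.exp t - 1), |K0 r t| ^ ρ) ^ (1 / ρ)
        ≤ Cρ * (Real.exp t - 1) ^ (1 / ρ) * (Real.exp t + 1)⁻¹ := by
  have hρ0 : 0 < ρ := by linarith
  have hs : 0 < 1 - ρ / 2 := by linarith
  refine ⟨(1 / (1 - ρ / 2)) ^ (1 / ρ), by positivity, fun t ht => ?_⟩
  have hB : 0 ≤ exp t - 1 := by linarith [one_le_exp ht.le]
  have hA : 0 < exp t + 1 := by positivity
  calc (∫ r in (0 : ℝ)..exp t - 1, |K0 r t| ^ ρ) ^ (1 / ρ)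
      ≤ ((exp t - 1) * (exp t + 1) ^ (-ρ) / (1 - ρ / 2)) ^ (1 / ρ) :=
        rpow_le_rpow (intervalIntegral.integral_nonneg hB fun r _ => by positivity)
          (integral_abs_K0_rpow_le hρ0.le hρ2 ht.le) (by positivity)
    _ = (1 / (1 - ρ / 2)) ^ (1 / ρ) * (exp t - 1) ^ (1 / ρ) * (exp t + 1)⁻¹ := by
        rw [div_eq_mul_one_div, mul_comm, ← mul_assoc, mul_rpow (by positivity) (by positivity),
          mul_rpow (by positivity) hB, ← rpow_mul hA.le, neg_mul, mul_one_div_cancel hρ0.ne',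
          rpow_neg_one]
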